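/- arXiv:2004.06714 — 4 statements merged into one kernel-verified Lean document; each statement's English description precedes it below -/
import Mathlib

section
/- Let O ⊆ ℝ^d be an open set and let S ⊆ O be compact. Then the inward filling infill_O S is a compact subset of O, and infill_O(infill_O S) = infill_O S. -/
/-!
A relatively compact component `C` of the open set `O \ S` is open with frontier in `S`, so by the
maximum principle a continuous function with no local maxima in `O \ S` is bounded on `C` by its
bound on `S`. Applied to `‖x‖` and to `-dist(x, Oᶜ)`, this confines `infill O S` to a compact
subset of `O`; there it is closed, since the components of `O \ S` are open. Idempotence holds
because each component of `O \ S` lies entirely inside or entirely outside `infill O S`, so the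
components of `O \ infill O S` are exactly the unfilled components of `O \ S`.
-/

open MeasureTheory Metric Set Filter
open scoped ENNReal Topology OnePoint

noncomputable section

/-- `d`-dimensional Euclidean space. -/
abbrev Euc (d : ℕ) : Type := EuclideanSpace ℝ (Fin d)

/-- A real-valued function is *harmonic on a set* if it is continuous there and satisfies
the mean value equality over every closed ball contained in the set. -/
def HarmOn {d : ℕ} (h : Euc d → ℝ) (O : Set (Euc d)) : Prop :=
  ContinuousOn h O ∧
    ∀ x : Euc d, ∀ r : ℝ, 0 < r → closedBall x r ⊆ O →
      h x = ⨍ y in closedBall x r, h y ∂volume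

/-- An `EReal`-valued function is *subharmonic on a set* if it is upper semicontinuous there,
nowhere `+∞` there, and on every closed ball contained in the set it is dominated by each
continuous function harmonic in the interior that dominates it on the boundary sphere. -/
def SbhOn {d : ℕ} (u : Euc d → EReal) (O : Set (Euc d)) : Prop :=
  UpperSemicontinuousOn u O ∧ (∀ x ∈ O, u x < ⊤) ∧
    ∀ x : Euc d, ∀ r : ℝ, 0 < r → closedBall x r ⊆ O →
      ∀ h : Euc d → ℝ, ContinuousOn h (closedBall x r) → HarmOn h (ball x r) →
        (∀ y ∈ sphere x r, u y ≤ (h y : EReal)) →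
        ∀ y ∈ closedBall x r, u y ≤ (h y : EReal)

/-- The positive part of an extended real number, as a member of `ℝ≥0∞`. -/
def erealPos (x : EReal) : ℝ≥0∞ := if x = ⊤ then ⊤ else ENNReal.ofReal x.toReal

/-- The integral of an `EReal`-valued function against a measure, with values in `EReal`:
the lower integral of the positive part minus the lower integral of the negative part. -/
def eInt {d : ℕ} (μ : Measure (Euc d)) (u : Euc d → EReal) : EReal :=
  ((∫⁻ x, erealPos (u x) ∂μ : ℝ≥0∞) : EReal) -
    ((∫⁻ x, erealPos (-(u x)) ∂μ : ℝ≥0∞) : EReal)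

/-- The (closed) support of a measure: points all of whose open neighbourhoods
have strictly positive measure. -/
def msupp {d : ℕ} (μ : Measure (Euc d)) : Set (Euc d) :=
  {x | ∀ U : Set (Euc d), IsOpen U → x ∈ U → 0 < μ U}

/-- A finite positive Borel measure whose support is a compact subset of `O`. -/
def MeasCompIn {d : ℕ} (μ : Measure (Euc d)) (O : Set (Euc d)) : Prop :=
  IsCompact (msupp μ) ∧ msupp μ ⊆ O ∧ μ (msupp μ)ᶜ = 0 ∧ μ Set.univ < ⊤

/-- The *inward filling* of `S` with respect to `O`: the union of `S` with all connected
components of `O \ S` that are relatively compact in `O`. -/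
def infill {X : Type*} [TopologicalSpace X] (O S : Set X) : Set X :=
  S ∪ {y | ∃ x ∈ O \ S, y ∈ connectedComponentIn (O \ S) x ∧
      IsCompact (closure (connectedComponentIn (O \ S) x)) ∧
      closure (connectedComponentIn (O \ S) x) ⊆ O}

section Topological

variable {X : Type*} [TopologicalSpace X] {O S : Set X}

lemma mem_infill_iff {y : X} :
    y ∈ infill O S ↔
      y ∈ S ∨ (y ∈ O \ S ∧ IsCompact (closure (connectedComponentIn (O \ S) y)) ∧
        closure (connectedComponentIn (O \ S) y) ⊆ O) := by
  refine or_congr_right ⟨?_, fun ⟨hy, hc, hO⟩ => ⟨y, hy, mem_connectedComponentIn hy, hc, hO⟩⟩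
  rintro ⟨x, -, hy, hc, hO⟩
  rw [← connectedComponentIn_eq hy]
  exact ⟨connectedComponentIn_subset _ _ hy, hc, hO⟩

lemma infill_subset (hSO : S ⊆ O) : infill O S ⊆ O := by
  intro y hy
  rcases mem_infill_iff.1 hy with hyS | ⟨hy, -⟩
  exacts [hSO hyS, hy.1]

lemma connectedComponentIn_subset_diff_infill {y : X}
    (hy : y ∈ O \ infill O S) : connectedComponentIn (O \ S) y ⊆ O \ infill O S := by
  intro z hz
  have hzU : z ∈ O \ S := connectedComponentIn_subset _ _ hz
  refine ⟨hzU.1, fun hzF => ?_⟩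
  rcases mem_infill_iff.1 hzF with hzS | ⟨-, hc, hO⟩
  · exact hzU.2 hzS
  · rw [← connectedComponentIn_eq hz] at hc hO
    have hyS : y ∉ S := fun h => hy.2 (Or.inl h)
    exact hy.2 (mem_infill_iff.2 (Or.inr ⟨⟨hy.1, hyS⟩, hc, hO⟩))

lemma infill_infill : infill O (infill O S) = infill O S := by
  refine Subset.antisymm (fun y hy => ?_) subset_union_left
  rcases mem_infill_iff.1 hy with hyF | ⟨hy, hc, hO⟩
  · exact hyF
  have hyS : y ∉ S := fun h => hy.2 (Or.inl h)
  have hsame : connectedComponentIn (O \ infill O S) y = connectedComponentIn (O \ S) y :=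
    Subset.antisymm
      (connectedComponentIn_mono _ (sdiff_subset_sdiff_right subset_union_left))
      (isPreconnected_connectedComponentIn.subset_connectedComponentIn
        (mem_connectedComponentIn ⟨hy.1, hyS⟩) (connectedComponentIn_subset_diff_infill hy))
  rw [hsame] at hc hO
  exact absurd (mem_infill_iff.2 (Or.inr ⟨⟨hy.1, hyS⟩, hc, hO⟩)) hy.2

lemma IsOpen.le_on_closure_of_le_on_frontier {C : Set X} (hC : IsOpen C)
    (hCc : IsCompact (closure C)) {g : X → ℝ} (hg : ContinuousOn g (closure C)) {b : ℝ}
    (hfr : ∀ y ∈ frontier C, g y ≤ b) (hmax : ∀ p ∈ C, b < g p → ¬IsLocalMax g p) :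
    ∀ x ∈ closure C, g x ≤ b := by
  intro x hx
  obtain ⟨p, hp, hpmax⟩ := hCc.exists_isMaxOn ⟨x, hx⟩ hg
  have hgp : g p ≤ b := by
    by_cases hpC : p ∈ C
    · exact not_lt.1 fun hbp =>
        hmax p hpC hbp (hpmax.isLocalMax (mem_of_superset (hC.mem_nhds hpC) subset_closure))
    · exact hfr p ⟨hp, by rwa [hC.interior_eq]⟩
  exact (hpmax hx).trans hgp

variable [LocallyConnectedSpace X]

lemma frontier_connectedComponentIn_subset (hO : IsOpen O) (hS : IsClosed S) {x : X}
    (hsub : closure (connectedComponentIn (O \ S) x) ⊆ O) :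
    frontier (connectedComponentIn (O \ S) x) ⊆ S := by
  have hU : IsOpen (O \ S) := hO.sdiff hS
  rw [hU.connectedComponentIn.frontier_eq]
  rintro y ⟨hyc, hyC⟩
  by_contra hyS
  have hyU : y ∈ O \ S := ⟨hsub hyc, hyS⟩
  obtain ⟨z, hzy, hzx⟩ :=
    mem_closure_iff.1 hyc _ hU.connectedComponentIn (mem_connectedComponentIn hyU)
  rw [connectedComponentIn_eq hzx, ← connectedComponentIn_eq hzy] at hyC
  exact hyC (mem_connectedComponentIn hyU)

lemma le_on_infill (hO : IsOpen O) (hS : IsClosed S) {g : X → ℝ} (hg : Continuous g) {b : ℝ}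
    (hgS : ∀ y ∈ S, g y ≤ b) (hmax : ∀ p ∈ O \ S, b < g p → ¬IsLocalMax g p) :
    ∀ y ∈ infill O S, g y ≤ b := by
  intro y hy
  rcases mem_infill_iff.1 hy with hyS | ⟨hyU, hc, hsub⟩
  · exact hgS y hyS
  refine (hO.sdiff hS).connectedComponentIn.le_on_closure_of_le_on_frontier hc hg.continuousOn
    (fun z hz => hgS z (frontier_connectedComponentIn_subset hO hS hsub hz))
    (fun p hp => hmax p (connectedComponentIn_subset _ _ hp)) y
    (subset_closure (mem_connectedComponentIn hyU))

lemma closure_infill_inter_subset (hO : IsOpen O) (hS : IsClosed S) :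
    closure (infill O S) ∩ O ⊆ infill O S := by
  rintro x ⟨hx, hxO⟩
  by_cases hxS : x ∈ S
  · exact Or.inl hxS
  have hxU : x ∈ O \ S := ⟨hxO, hxS⟩
  obtain ⟨z, hzx, hzF⟩ := mem_closure_iff.1 hx _ (hO.sdiff hS).connectedComponentIn
    (mem_connectedComponentIn hxU)
  rcases mem_infill_iff.1 hzF with hzS | ⟨-, hc, hsub⟩
  · exact absurd hzS (connectedComponentIn_subset _ _ hzx).2
  · rw [← connectedComponentIn_eq hzx] at hc hsub
    exact mem_infill_iff.2 (Or.inr ⟨hxU, hc, hsub⟩)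

end Topological

section Normed

variable {E : Type*} [NormedAddCommGroup E] [NormedSpace ℝ E]

lemma not_isLocalMax_of_lt_add_smul {f : E → ℝ} {p v : E}
    (h : ∀ t ∈ Ioc (0 : ℝ) 1, f p < f (p + t • v)) : ¬IsLocalMax f p := by
  intro hmax
  have hpath : Tendsto (fun t : ℝ => p + t • v) (𝓝[>] 0) (𝓝 p) :=
    tendsto_nhdsWithin_of_tendsto_nhds <|
      (continuous_const.add (continuous_id.smul continuous_const) :
        Continuous fun t : ℝ => p + t • v).tendsto' 0 p (by simp)
  have hsmall : ∀ᶠ t in 𝓝[>] (0 : ℝ), t ∈ Ioc (0 : ℝ) 1 := Ioc_mem_nhdsGT one_pos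
  obtain ⟨t, ht, hle⟩ := (hsmall.and (hpath.eventually hmax)).exists
  exact (h t ht).not_ge hle

lemma not_isLocalMax_norm {p : E} (hp : p ≠ 0) : ¬IsLocalMax (‖·‖) p := by
  refine not_isLocalMax_of_lt_add_smul (v := p) fun t ht => ?_
  rw [show p + t • p = (1 + t) • p by rw [add_smul, one_smul], norm_smul, Real.norm_of_nonneg (by linarith [ht.1])]
  nlinarith [ht.1, norm_pos_iff.2 hp]

lemma not_isLocalMax_neg_infDist [ProperSpace E] {T : Set E} (hT : T.Nonempty) {p : E}
    (hp : 0 < infDist p T) : ¬IsLocalMax (fun x => -infDist x T) p := by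
  obtain ⟨z, hz, hdist⟩ := exists_mem_closure_infDist_eq_dist hT p
  refine not_isLocalMax_of_lt_add_smul (v := z - p) fun t ht => neg_lt_neg ?_
  calc infDist (p + t • (z - p)) T
      = infDist (p + t • (z - p)) (closure T) := (infDist_closure).symm
    _ ≤ dist (p + t • (z - p)) z := infDist_le_dist_of_mem hz
    _ = (1 - t) * dist p z := by
      rw [dist_eq_norm, dist_eq_norm, show p + t • (z - p) - z = (1 - t) • (p - z) by module,
        norm_smul, Real.norm_of_nonneg (by linarith [ht.2])]
    _ < infDist p T := by rw [hdist] at hp ⊢; nlinarith [ht.1]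

variable [ProperSpace E] {O S : Set E}

lemma exists_isCompact_infill_subset (hO : IsOpen O) (hSO : S ⊆ O) (hS : IsCompact S) :
    ∃ K, IsCompact K ∧ K ⊆ O ∧ infill O S ⊆ K := by
  obtain ⟨R, hR0, hSR⟩ : ∃ R, 0 ≤ R ∧ S ⊆ closedBall 0 R := by
    obtain ⟨r, hr⟩ := hS.isBounded.subset_closedBall 0
    exact ⟨max r 0, le_max_right _ _, hr.trans (closedBall_subset_closedBall (le_max_left _ _))⟩
  have hFR : infill O S ⊆ closedBall 0 R := fun y hy => mem_closedBall_zero_iff.2 <|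
    le_on_infill hO hS.isClosed continuous_norm (fun y hy => mem_closedBall_zero_iff.1 (hSR hy))
      (fun p _ hp => not_isLocalMax_norm (norm_pos_iff.1 (hR0.trans_lt hp))) y hy
  rcases Oᶜ.eq_empty_or_nonempty with hOc | hOc
  · exact ⟨closedBall 0 R, isCompact_closedBall 0 R, by simp [compl_empty_iff.1 hOc], hFR⟩
  have hpos : ∀ x ∈ O, 0 < infDist x Oᶜ := fun x hx =>
    (hO.isClosed_compl.notMem_iff_infDist_pos hOc).1 (not_not.2 hx)
  obtain ⟨δ, hδ, hSδ⟩ :=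
    hS.exists_forall_le' (continuous_infDist_pt _).continuousOn fun x hx => hpos x (hSO hx)
  have hFδ : ∀ y ∈ infill O S, δ ≤ infDist y Oᶜ := fun y hy => neg_le_neg_iff.1 <|
    le_on_infill hO hS.isClosed (continuous_infDist_pt _).neg
      (fun y hy => neg_le_neg (hSδ y hy))
      (fun p hp _ => not_isLocalMax_neg_infDist hOc (hpos p hp.1)) y hy
  refine ⟨closedBall 0 R ∩ {x | δ ≤ infDist x Oᶜ},
    (isCompact_closedBall 0 R).inter_right (isClosed_le continuous_const (continuous_infDist_pt _)),
    fun x hx => ?_, fun y hy => ⟨hFR hy, hFδ y hy⟩⟩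
  by_contra hxO
  exact hδ.not_ge (infDist_zero_of_mem (mem_compl hxO) ▸ hx.2)

lemma isCompact_infill (hO : IsOpen O) (hSO : S ⊆ O) (hS : IsCompact S) :
    IsCompact (infill O S) := by
  obtain ⟨K, hK, hKO, hFK⟩ := exists_isCompact_infill_subset hO hSO hS
  have hclosed : IsClosed (infill O S) := isClosed_of_closure_subset fun x hx =>
    closure_infill_inter_subset hO hS.isClosed
      ⟨hx, hKO (closure_minimal hFK hK.isClosed hx)⟩
  exact hK.of_isClosed_subset hclosed hFK

end Normed

theorem stmt_0_general {d : ℕ} (O : Set (Euc d)) (hO : IsOpen O)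
    (S : Set (Euc d)) (hSO : S ⊆ O) (hS : IsCompact S) :
    IsCompact (infill O S) ∧ infill O S ⊆ O ∧ infill O (infill O S) = infill O S :=
  ⟨isCompact_infill hO hSO hS, infill_subset hSO, infill_infill⟩

/-- For a compact subset `S` of an open set `O ⊆ ℝ^d`, the inward filling
`infill O S` is a compact subset of `O`, and inward filling is idempotent. -/
theorem stmt_0 {d : ℕ} (O : Set (Euc d)) (hO : IsOpen O) (hOne : O.Nonempty)
    (S : Set (Euc d)) (hSO : S ⊆ O) (hS : IsCompact S) :
    IsCompact (infill O S) ∧ infill O S ⊆ O ∧ infill O (infill O S) = infill O S :=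
  stmt_0_general O hO S hSO hS
end
end

section
/- Let O, O′ be open sets with O ⊆ O′ ⊆ ℝ^d_∞ and let S ⊆ O be compact. Then infill_O S ⊆ infill_{O′} S. -/
open MeasureTheory Metric Set Filter
open scoped ENNReal Topology OnePoint

noncomputable section

/-! Let `C` be a component of `O \ S` with `closure C ⊆ O`, and `C'` the component of `O' \ S`
containing it. Since `closure C ⊆ O`, the limit points of `C` lying in `C'` lie in `O \ S`,
hence in `C`; and `C` is open because `ℝ^d_∞ ≅ Sᵈ` is locally connected. So `C` is clopen
in the connected set `C'`, i.e. `C' = C`, and `C` is also one of the components filled in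
by `infill O' S`. -/

section

variable {X : Type*} [TopologicalSpace X]

theorem closure_connectedComponentIn_inter_subset (F : Set X) (x : X) :
    closure (connectedComponentIn F x) ∩ F ⊆ connectedComponentIn F x := by
  by_cases hx : x ∈ F
  · rintro z ⟨hz_cl, hz_F⟩
    have hpre : IsPreconnected (connectedComponentIn F x ∪ {z}) :=
      isPreconnected_connectedComponentIn.subset_closure subset_union_left
        (union_subset subset_closure (singleton_subset_iff.mpr hz_cl))
    have hsub : connectedComponentIn F x ∪ {z} ⊆ F :=
      union_subset (connectedComponentIn_subset F x) (singleton_subset_iff.mpr hz_F)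
    exact hpre.subset_connectedComponentIn (Or.inl (mem_connectedComponentIn hx)) hsub
      (Or.inr rfl)
  · simp [connectedComponentIn_eq_empty hx]

theorem connectedComponentIn_eq_of_closure_inter_subset [LocallyConnectedSpace X]
    {U V : Set X} {x : X} (hU : IsOpen U) (hUV : U ⊆ V) (hx : x ∈ U)
    (h : closure (connectedComponentIn U x) ∩ V ⊆ U) :
    connectedComponentIn V x = connectedComponentIn U x := by
  refine Subset.antisymm ?_ (connectedComponentIn_mono x hUV)
  refine isPreconnected_connectedComponentIn.subset_of_closure_inter_subset
    hU.connectedComponentIn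
    ⟨x, mem_connectedComponentIn (hUV hx), mem_connectedComponentIn hx⟩ ?_
  rintro z ⟨hz_cl, hz_V⟩
  exact closure_connectedComponentIn_inter_subset U x
    ⟨hz_cl, h ⟨hz_cl, connectedComponentIn_subset V x hz_V⟩⟩

theorem infill_mono [LocallyConnectedSpace X] {O O' S : Set X} (hO : IsOpen O)
    (hS : IsClosed S) (hOO' : O ⊆ O') : infill O S ⊆ infill O' S := by
  rintro y (hy | ⟨x, hx, hy, hC_compact, hC_sub⟩)
  · exact Or.inl hy
  have hC : connectedComponentIn (O' \ S) x = connectedComponentIn (O \ S) x :=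
    connectedComponentIn_eq_of_closure_inter_subset (hO.sdiff hS)
      (sdiff_subset_sdiff_left hOO') hx fun z ⟨hz_cl, hz_V⟩ => ⟨hC_sub hz_cl, hz_V.2⟩
  refine Or.inr ⟨x, ⟨hOO' hx.1, hx.2⟩, ?_⟩
  rw [hC]
  exact ⟨hy, hC_compact, hC_sub.trans hOO'⟩

end

instance OnePoint.locallyConnectedSpace_of_finiteDimensional {V : Type*}
    [NormedAddCommGroup V] [NormedSpace ℝ V] [FiniteDimensional ℝ V] :
    LocallyConnectedSpace (OnePoint V) :=
  have := ChartedSpace.locallyConnectedSpace (EuclideanSpace ℝ (Fin (Module.finrank ℝ V)))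
    (sphere (0 : EuclideanSpace ℝ (Fin (Module.finrank ℝ V + 1))) 1)
  (onePointEquivSphereOfFinrankEq (ι := Fin (Module.finrank ℝ V + 1))
    (by simp)).locallyConnectedSpace

theorem stmt_2_general {d : ℕ} (O O' : Set (OnePoint (Euc d)))
    (hO : IsOpen O) (hOO' : O ⊆ O')
    (S : Set (OnePoint (Euc d))) (hS : IsCompact S) :
    infill O S ⊆ infill O' S :=
  infill_mono hO hS.isClosed hOO'

/-- If `O ⊆ O'` are open subsets of the one-point compactification
`ℝ^d_∞` of `ℝ^d` and `S ⊆ O` is compact, then `infill O S ⊆ infill O' S`. -/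
theorem stmt_2 {d : ℕ} (O O' : Set (OnePoint (Euc d)))
    (hO : IsOpen O) (hO' : IsOpen O') (hOO' : O ⊆ O')
    (S : Set (OnePoint (Euc d))) (hSO : S ⊆ O) (hS : IsCompact S) :
    infill O S ⊆ infill O' S :=
  stmt_2_general O O' hO hOO' S hS
end
end

section
/- Let O ⊆ ℝ^d be an open set, r > 0, and let ϑ be an Arens–Singer measure on the ball r𝔹 at 0, i.e. ϑ is a positive Borel measure with compact support in r𝔹 and ∫ h dϑ = h(0) for every h harmonic on r𝔹. Let ω be a positive Borel measure with compact support S = supp ω in O, and suppose ⋃_{x∈S} B(x,r) is relatively compact in O. Then the convolution ω∗ϑ, defined by (ω∗ϑ)(B) = ∫_S ϑ(B−x) dω(x) for Borel B ⋐ O, is a har(O)-balayage of ω: ∫ h dω = ∫ h d(ω∗ϑ) for every h harmonic on O. -/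
open MeasureTheory Metric Set Filter
open scoped ENNReal Topology OnePoint

noncomputable section

/-!
Each translate `y ↦ h (x + y)` with `x ∈ supp ω` is harmonic on `r𝔹`, so the Arens–Singer
property gives `∫ h (x + y) dϑ(y) = h x`; integrating this in `x` against `ω` and applying Fubini
to `ω ∗ ϑ`, the image of `ω ⊗ ϑ` under addition, gives the balayage identity. Since both measures
live on the compact set `K = closure (⋃ x ∈ supp ω, B(x, r)) ⊆ O`, one may first replace `h` by a
bounded continuous function agreeing with it on `K`, which makes all integrals finite.
-/

open BoundedContinuousFunction

theorem IsCompact.exists_boundedContinuous_eqOn {Y : Type*} [TopologicalSpace Y] [NormalSpace Y]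
    [T2Space Y] {K : Set Y} (hK : IsCompact K) {h : Y → ℝ} (hh : ContinuousOn h K) :
    ∃ g : Y →ᵇ ℝ, EqOn g h K := by
  have : CompactSpace K := isCompact_iff_compactSpace.mp hK
  obtain ⟨g, -, hg⟩ := exists_norm_eq_domRestrict_eq_of_closed
    (mkOfCompact ⟨K.domRestrict h, continuousOn_iff_continuous_domRestrict.mp hh⟩) hK.isClosed
  exact ⟨g, fun y hy => congrArg (fun f : K →ᵇ ℝ => f ⟨y, hy⟩) hg⟩

/-- Fubini for the convolution `ρ = μ ∗ ν`. -/
theorem integral_eq_integral_integral_add_of_measure_eq {G : Type*} [Add G] [TopologicalSpace G]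
    [ContinuousAdd G] [SecondCountableTopology G] [MeasurableSpace G] [BorelSpace G]
    {μ ν ρ : Measure G} [IsFiniteMeasure μ] [IsFiniteMeasure ν]
    (hρ : ∀ B, MeasurableSet B → ρ B = ∫⁻ x, ν ((fun y => x + y) ⁻¹' B) ∂μ) (g : G →ᵇ ℝ) :
    ∫ y, g y ∂ρ = ∫ x, ∫ y, g (x + y) ∂ν ∂μ := by
  have hρ_map : ρ = (μ.prod ν).map (fun p => p.1 + p.2) := by
    ext B hB
    rw [hρ B hB, Measure.map_apply measurable_add hB, Measure.prod_apply (measurable_add hB)]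
    rfl
  rw [hρ_map, integral_map measurable_add.aemeasurable g.continuous.aestronglyMeasurable]
  have hint : Integrable (fun p : G × G => g (p.1 + p.2)) (μ.prod ν) :=
    (g.compContinuous ⟨fun p : G × G => p.1 + p.2, continuous_add⟩).integrable (μ.prod ν)
  exact integral_prod _ hint

section Harmonic

variable {d : ℕ}

theorem HarmOn.mono {h : Euc d → ℝ} {O U : Set (Euc d)} (hh : HarmOn h O) (hUO : U ⊆ O) :
    HarmOn h U :=
  ⟨hh.1.mono hUO, fun x r hr hx => hh.2 x r hr (hx.trans hUO)⟩

theorem HarmOn.comp_add_left {h : Euc d → ℝ} {O : Set (Euc d)} (hh : HarmOn h O) (x : Euc d) :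
    HarmOn (fun y => h (x + y)) ((x + ·) ⁻¹' O) := by
  refine ⟨hh.1.comp (continuous_const_add x).continuousOn (mapsTo_preimage _ _), ?_⟩
  intro z ρ hρ hzO
  have hpre : (x + ·) ⁻¹' closedBall (x + z) ρ = closedBall z ρ := by
    simp [preimage_add_closedBall]
  have hmp : MeasurePreserving (x + ·) (volume : Measure (Euc d)) volume :=
    measurePreserving_add_left volume x
  have hxzO : closedBall (x + z) ρ ⊆ O := by
    rw [← hpre] at hzO
    exact (add_left_surjective x).preimage_subset_preimage_iff.mp hzO
  show h (x + z) = ⨍ y in closedBall z ρ, h (x + y)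
  rw [hh.2 (x + z) ρ hρ hxzO, setAverage_eq, setAverage_eq, ← hpre,
    hmp.setIntegral_preimage_emb (Homeomorph.addLeft x).measurableEmbedding, measureReal_def,
    measureReal_def, hmp.measure_preimage measurableSet_closedBall.nullMeasurableSet]

theorem MeasCompIn.ae_mem_msupp {μ : Measure (Euc d)} {O : Set (Euc d)} (hμ : MeasCompIn μ O) :
    ∀ᵐ x ∂μ, x ∈ msupp μ :=
  ae_iff.mpr hμ.2.2.1

theorem MeasCompIn.isFiniteMeasure {μ : Measure (Euc d)} {O : Set (Euc d)} (hμ : MeasCompIn μ O) :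
    IsFiniteMeasure μ :=
  ⟨hμ.2.2.2⟩

end Harmonic

theorem stmt_12_general {d : ℕ} (O : Set (Euc d))
    (r : ℝ) (hr : 0 < r)
    (ϑ : Measure (Euc d)) (hϑ : MeasCompIn ϑ (ball (0 : Euc d) r))
    (hAS : ∀ h : Euc d → ℝ, HarmOn h (ball (0 : Euc d) r) → ∫ y, h y ∂ϑ = h 0)
    (ω : Measure (Euc d)) (hω : MeasCompIn ω O)
    (hUr : IsCompact (closure (⋃ x ∈ msupp ω, ball x r)) ∧
      closure (⋃ x ∈ msupp ω, ball x r) ⊆ O)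
    (μc : Measure (Euc d))
    (hμc : ∀ B : Set (Euc d), MeasurableSet B →
      μc B = ∫⁻ x in msupp ω, ϑ ((fun y => x + y) ⁻¹' B) ∂ω) :
    ∀ h : Euc d → ℝ, HarmOn h O → ∫ y, h y ∂ω = ∫ y, h y ∂μc := by
  intro h hh
  set S := msupp ω
  set K := closure (⋃ x ∈ S, ball x r)
  obtain ⟨hKc, hKO⟩ := hUr
  have := hω.isFiniteMeasure
  have := hϑ.isFiniteMeasure
  have hballK : ∀ x ∈ S, ball x r ⊆ K := fun x hx =>
    (subset_biUnion_of_mem (u := fun x => ball x r) hx).trans subset_closure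
  have hSK : S ⊆ K := fun x hx => hballK x hx (mem_ball_self hr)
  have hϑK : ∀ x ∈ S, ∀ᵐ y ∂ϑ, x + y ∈ K := fun x hx =>
    hϑ.ae_mem_msupp.mono fun y hy => hballK x hx (by simpa using hϑ.2.1 hy)
  have hμcK : ∀ᵐ y ∂μc, y ∈ K := by
    rw [ae_iff, ← compl_def, hμc _ isClosed_closure.measurableSet.compl]
    exact (setLIntegral_congr_fun hω.1.isClosed.measurableSet
      fun x hx => ae_iff.mp (hϑK x hx)).trans lintegral_zero
  obtain ⟨g, hgh⟩ := hKc.exists_boundedContinuous_eqOn (hh.1.mono hKO)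
  have hmean : ∀ x ∈ S, ∫ y, g (x + y) ∂ϑ = g x := by
    intro x hx
    have hharm : HarmOn (fun y => h (x + y)) (ball 0 r) :=
      (hh.comp_add_left x).mono fun y hy => hKO (hballK x hx (by simpa using hy))
    rw [integral_congr_ae ((hϑK x hx).mono fun y hy => hgh hy), hAS _ hharm, add_zero,
      hgh (hSK hx)]
  calc ∫ y, h y ∂ω = ∫ x, ∫ y, g (x + y) ∂ϑ ∂ω :=
        integral_congr_ae (hω.ae_mem_msupp.mono fun x hx =>
          ((hmean x hx).trans (hgh (hSK hx))).symm)
    _ = ∫ y, g y ∂μc := by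
      rw [integral_eq_integral_integral_add_of_measure_eq hμc g,
        Measure.restrict_eq_self_of_ae_mem hω.ae_mem_msupp]
    _ = ∫ y, h y ∂μc := integral_congr_ae (hμcK.mono fun y hy => hgh hy)

/-- Let `ϑ` be an Arens–Singer measure on the ball `r𝔹` at `0`, i.e. a
positive measure with compact support in `r𝔹` such that `∫ h dϑ = h 0` for every `h`
harmonic on `r𝔹`. Let `ω` be a finite positive measure with compact support `S = supp ω`
in the open set `O`, with `⋃_{x ∈ S} B(x,r)` relatively compact in `O`. Then the convolution
`ω ∗ ϑ`, determined by `B ↦ ∫_S ϑ(B - x) dω(x)`, is a `har(O)`-balayage of `ω`. -/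
theorem stmt_12 {d : ℕ} (O : Set (Euc d)) (hO : IsOpen O) (hOne : O.Nonempty)
    (r : ℝ) (hr : 0 < r)
    (ϑ : Measure (Euc d)) (hϑ : MeasCompIn ϑ (ball (0 : Euc d) r))
    (hAS : ∀ h : Euc d → ℝ, HarmOn h (ball (0 : Euc d) r) → ∫ y, h y ∂ϑ = h 0)
    (ω : Measure (Euc d)) (hω : MeasCompIn ω O)
    (hUr : IsCompact (closure (⋃ x ∈ msupp ω, ball x r)) ∧
      closure (⋃ x ∈ msupp ω, ball x r) ⊆ O)
    (μc : Measure (Euc d))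
    (hμc : ∀ B : Set (Euc d), MeasurableSet B →
      μc B = ∫⁻ x in msupp ω, ϑ ((fun y => x + y) ⁻¹' B) ∂ω) :
    ∀ h : Euc d → ℝ, HarmOn h O → ∫ y, h y ∂ω = ∫ y, h y ∂μc :=
  stmt_12_general O r hr ϑ hϑ hAS ω hω hUr μc hμc
end
end

section
/- Let O ⊆ ℝ^d be an open set, r > 0, and let ϑ be a Jensen measure on the ball r𝔹 at 0, i.e. ϑ is a positive Borel measure with compact support in r𝔹 and u(0) ≤ ∫ u dϑ for every u subharmonic on r𝔹. Let ω be a positive Borel measure with compact support S = supp ω in O, and suppose ⋃_{x∈S} B(x,r) is relatively compact in O. Then the convolution ω∗ϑ, defined by (ω∗ϑ)(B) = ∫_S ϑ(B−x) dω(x) for Borel B ⋐ O, is an sbh(O)-balayage of ω: ∫ u dω ≤ ∫ u d(ω∗ϑ) for every u subharmonic on O. -/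
open MeasureTheory Metric Set Filter
open scoped ENNReal Topology OnePoint

noncomputable section

/-!
For `x ∈ supp ω` the translate `y ↦ u (x + y)` is subharmonic on `r𝔹`, so the Jensen property of
`ϑ` gives `u x ≤ ∫ u (x + y) dϑ(y)`; integrating in `ω` and unfolding the convolution by Fubini
gives the balayage inequality. As `u` is only upper semicontinuous on `O`, it is first replaced by
its truncation to `⋃_{x ∈ S} B(x, r)` (set to `⊥` outside), which is measurable and, the union
being relatively compact in `O`, bounded above; the positive parts are then integrable, so the
`EReal` differences of lower integrals can be rearranged as sums in `ℝ≥0∞`.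
-/

namespace MeasureTheory.Measure

variable {G : Type*} [MeasurableSpace G] [AddMonoid G] [MeasurableAdd₂ G]

theorem conv_apply (μ ν : Measure G) [SFinite ν] {s : Set G} (hs : MeasurableSet s) :
    (μ ∗ ν) s = ∫⁻ x, ν ((x + ·) ⁻¹' s) ∂μ := by
  rw [conv, map_apply measurable_add hs, prod_apply (measurable_add hs)]
  rfl

theorem ae_conv_mem_iff (μ ν : Measure G) [SFinite ν] {s : Set G} (hs : MeasurableSet s) :
    (∀ᵐ z ∂(μ ∗ ν), z ∈ s) ↔ ∀ᵐ x ∂μ, ∀ᵐ y ∂ν, x + y ∈ s := by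
  rw [conv, ae_map_iff (p := (· ∈ s)) measurable_add.aemeasurable hs]
  exact ae_prod_mem_iff_ae_ae_mem (measurable_add hs)

theorem eq_conv_of_apply_eq_setLIntegral {μ ν ρ : Measure G} [SFinite ν] {S : Set G}
    (hS : ∀ᵐ x ∂μ, x ∈ S)
    (hρ : ∀ B : Set G, MeasurableSet B → ρ B = ∫⁻ x in S, ν ((fun y => x + y) ⁻¹' B) ∂μ) :
    ρ = μ ∗ ν := by
  ext B hB
  rw [hρ B hB, conv_apply _ _ hB, restrict_eq_self_of_ae_mem hS]

end MeasureTheory.Measure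

theorem setAverage_comp_add_left {G E : Type*} [MeasurableSpace G] [AddGroup G] [MeasurableAdd G]
    [NormedAddCommGroup E] [NormedSpace ℝ E] (μ : Measure G) [μ.IsAddLeftInvariant]
    (f : G → E) (c : G) (s : Set G) :
    ⨍ y in (c + ·) ⁻¹' s, f (c + y) ∂μ = ⨍ y in s, f y ∂μ := by
  have hμ : MeasurePreserving (c + ·) μ μ := measurePreserving_add_left μ c
  have he : MeasurableEmbedding (c + ·) := measurableEmbedding_addLeft c
  rw [setAverage_eq, setAverage_eq, measureReal_def, measureReal_def,
    hμ.setIntegral_preimage_emb he f s, hμ.measure_preimage_emb he s]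

section Translation

variable {d : ℕ}

theorem preimage_neg_add_closedBall (c z : Euc d) (ρ : ℝ) :
    (-c + ·) ⁻¹' closedBall z ρ = closedBall (z + c) ρ := by
  rw [preimage_add_closedBall, sub_neg_eq_add]

theorem closedBall_subset_preimage_const_add_iff (c z : Euc d) (ρ : ℝ) (O : Set (Euc d)) :
    closedBall z ρ ⊆ (c + ·) ⁻¹' O ↔ closedBall (z + c) ρ ⊆ O := by
  rw [← image_subset_iff, image_add_left, preimage_neg_add_closedBall]

theorem HarmOn.comp_const_add {h : Euc d → ℝ} {O : Set (Euc d)} (hh : HarmOn h O) (c : Euc d) :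
    HarmOn (fun y => h (c + y)) ((c + ·) ⁻¹' O) := by
  refine ⟨hh.1.comp (continuous_const_add c).continuousOn (mapsTo_preimage _ _),
    fun x r hr hball => ?_⟩
  change h (c + x) = ⨍ y in closedBall x r, h (c + y)
  rw [add_comm, hh.2 (x + c) r hr ((closedBall_subset_preimage_const_add_iff c x r O).1 hball),
    ← setAverage_comp_add_left volume h c, preimage_add_closedBall, add_sub_cancel_right]

theorem SbhOn.comp_const_add {u : Euc d → EReal} {O : Set (Euc d)} (hu : SbhOn u O)
    (c : Euc d) : SbhOn (fun y => u (c + y)) ((c + ·) ⁻¹' O) := by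
  obtain ⟨husc, hlt, hsub⟩ := hu
  refine ⟨husc.comp (continuous_const_add c).continuousOn (mapsTo_preimage _ _),
    fun y hy => hlt _ hy, fun z ρ hρ hball h hc hh hsph y hy => ?_⟩
  have hsph' : ∀ w ∈ sphere (z + c) ρ, u w ≤ (h (-c + w) : EReal) := fun w hw => by
    have : -c + w ∈ sphere z ρ := by
      change w ∈ (-c + ·) ⁻¹' sphere z ρ
      rwa [preimage_add_sphere, sub_neg_eq_add]
    simpa using hsph (-c + w) this
  have hh' : HarmOn (fun w => h (-c + w)) (ball (z + c) ρ) := by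
    simpa [preimage_add_ball] using hh.comp_const_add (-c)
  have hc' : ContinuousOn (fun w => h (-c + w)) (closedBall (z + c) ρ) := by
    rw [← preimage_neg_add_closedBall]
    exact hc.comp (continuous_const_add (-c)).continuousOn (mapsTo_preimage _ _)
  have hy' : c + y ∈ closedBall (z + c) ρ := by
    rwa [← preimage_neg_add_closedBall, mem_preimage, neg_add_cancel_left]
  simpa using hsub (z + c) ρ hρ ((closedBall_subset_preimage_const_add_iff c z ρ O).1 hball)
    _ hc' hh' hsph' (c + y) hy'

theorem SbhOn.mono {u : Euc d → EReal} {O O' : Set (Euc d)} (hu : SbhOn u O)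
    (h : O' ⊆ O) : SbhOn u O' :=
  ⟨hu.1.mono h, fun x hx => hu.2.1 x (h hx), fun x ρ hρ hb => hu.2.2 x ρ hρ (hb.trans h)⟩

end Translation

theorem UpperSemicontinuousOn.exists_forall_le_coe {α : Type*} [TopologicalSpace α]
    {u : α → EReal} {K : Set α} (hK : IsCompact K) (hu : UpperSemicontinuousOn u K)
    (hlt : ∀ x ∈ K, u x < ⊤) : ∃ M : ℝ, ∀ z ∈ K, u z ≤ M := by
  rcases K.eq_empty_or_nonempty with rfl | hne
  · exact ⟨0, by simp⟩
  obtain ⟨a, ha, hmax⟩ := hu.exists_isMaxOn hne hK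
  exact ⟨(u a).toReal, fun z hz => (hmax hz).trans (EReal.le_coe_toReal (hlt a ha).ne)⟩

theorem UpperSemicontinuousOn.measurable_piecewise_bot {α : Type*} [TopologicalSpace α]
    [MeasurableSpace α] [OpensMeasurableSpace α] {u : α → EReal} {U : Set α}
    [DecidablePred (· ∈ U)] (hU : MeasurableSet U) (hu : UpperSemicontinuousOn u U) :
    Measurable (U.piecewise u ⊥) := by
  refine measurable_of_restrict_of_restrict_compl hU ?_ ?_
  · rw [domRestrict_piecewise]
    exact (upperSemicontinuousOn_iff_restrict.2 hu).measurable
  · rw [domRestrict_piecewise_compl]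
    exact measurable_const

theorem UpperSemicontinuousOn.exists_measurable_le_coe_eqOn {α : Type*} [TopologicalSpace α]
    [MeasurableSpace α] [OpensMeasurableSpace α] {u : α → EReal} {U : Set α}
    (hU : MeasurableSet U) (hK : IsCompact (closure U)) (hu : UpperSemicontinuousOn u (closure U))
    (hlt : ∀ x ∈ closure U, u x < ⊤) :
    ∃ g : α → EReal, Measurable g ∧ (∃ M : ℝ, ∀ z, g z ≤ M) ∧ EqOn g u U := by
  classical
  obtain ⟨M, hM⟩ := hu.exists_forall_le_coe hK hlt
  refine ⟨U.piecewise u ⊥, (hu.mono subset_closure).measurable_piecewise_bot hU, ⟨M, fun z => ?_⟩,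
    piecewise_eqOn _ _ _⟩
  by_cases hz : z ∈ U
  · simpa [hz] using hM z (subset_closure hz)
  · simp [hz]

theorem EReal.coe_ennreal_sub_le_sub_iff {a b p n : ℝ≥0∞} (ha : a ≠ ⊤) (hp : p ≠ ⊤) :
    (a : EReal) - b ≤ p - n ↔ a + n ≤ p + b := by
  lift a to NNReal using ha
  lift p to NNReal using hp
  rcases eq_top_or_lt_top b with rfl | hb
  · simp
  lift b to NNReal using hb.ne
  rcases eq_top_or_lt_top n with rfl | hn
  · simp [EReal.coe_nnreal_eq_coe_real, ← EReal.coe_sub]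
  lift n to NNReal using hn.ne
  simp only [EReal.coe_nnreal_eq_coe_real, ← EReal.coe_sub, EReal.coe_le_coe_iff, ← ENNReal.coe_add,
    ENNReal.coe_le_coe, ← NNReal.coe_le_coe, NNReal.coe_add]
  constructor <;> intro h <;> linarith

theorem erealPos_le_ofReal {x : EReal} {M : ℝ} (h : x ≤ M) : erealPos x ≤ ENNReal.ofReal M := by
  induction x with
  | bot => simp [erealPos]
  | coe a => simpa [erealPos] using ENNReal.ofReal_le_ofReal (EReal.coe_le_coe_iff.1 h)
  | top => simp at h

theorem erealPos_sub_erealPos_neg (w : EReal) : (erealPos w : EReal) - erealPos (-w) = w := by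
  induction w with
  | bot => simp [erealPos]
  | coe a =>
    rcases le_total 0 a with ha | ha
    · simp [erealPos, ← EReal.coe_neg, ENNReal.ofReal_of_nonpos (neg_nonpos.2 ha), ha]
    · simp [erealPos, ← EReal.coe_neg, ENNReal.ofReal_of_nonpos ha, neg_nonneg.2 ha]
  | top => simp [erealPos]

theorem measurable_erealPos : Measurable erealPos :=
  Measurable.ite (measurableSet_singleton ⊤) measurable_const
    (ENNReal.measurable_ofReal.comp measurable_ereal_toReal)

section Integral

variable {d : ℕ}

theorem lintegral_erealPos_ne_top {α : Type*} [MeasurableSpace α] (μ : Measure α)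
    [IsFiniteMeasure μ] {g : α → EReal} {M : ℝ} (hgM : ∀ z, g z ≤ M) :
    ∫⁻ z, erealPos (g z) ∂μ ≠ ⊤ :=
  ne_top_of_le_ne_top
    (by simpa using ENNReal.mul_ne_top ENNReal.ofReal_ne_top (measure_ne_top μ univ))
    (lintegral_mono fun z => erealPos_le_ofReal (hgM z) : _ ≤ ∫⁻ _, ENNReal.ofReal M ∂μ)

theorem eInt_congr_ae {μ : Measure (Euc d)} {u v : Euc d → EReal} (h : u =ᵐ[μ] v) :
    eInt μ u = eInt μ v := by
  unfold eInt
  congr 2 <;> exact lintegral_congr_ae (h.mono fun x hx => by simp only [hx])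

theorem eInt_le_eInt_conv (ω ϑ : Measure (Euc d)) [IsFiniteMeasure ω] [IsFiniteMeasure ϑ]
    {g : Euc d → EReal} (hg : Measurable g) {M : ℝ} (hgM : ∀ z, g z ≤ M)
    (hJ : ∀ᵐ x ∂ω, g x ≤ eInt ϑ (fun y => g (x + y))) :
    eInt ω g ≤ eInt (ω ∗ ϑ) g := by
  set f : Euc d → ℝ≥0∞ := fun z => erealPos (g z)
  set f' : Euc d → ℝ≥0∞ := fun z => erealPos (-g z)
  have hf : Measurable f := measurable_erealPos.comp hg
  have hf' : Measurable f' := measurable_erealPos.comp hg.neg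
  have hpt : ∀ᵐ x ∂ω, f x + ∫⁻ y, f' (x + y) ∂ϑ ≤ ∫⁻ y, f (x + y) ∂ϑ + f' x := by
    filter_upwards [hJ] with x hx
    rw [← erealPos_sub_erealPos_neg (g x)] at hx
    exact (EReal.coe_ennreal_sub_le_sub_iff (ne_top_of_le_ne_top ENNReal.ofReal_ne_top
      (erealPos_le_ofReal (hgM x))) (lintegral_erealPos_ne_top ϑ fun y => hgM (x + y))).1 hx
  have hP : Measurable fun x => ∫⁻ y, f (x + y) ∂ϑ :=
    (hf.comp measurable_add).lintegral_prod_right'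
  have hint := lintegral_mono_ae hpt
  rw [lintegral_add_left hf, lintegral_add_left hP,
    ← Measure.lintegral_conv hf, ← Measure.lintegral_conv hf'] at hint
  exact (EReal.coe_ennreal_sub_le_sub_iff (lintegral_erealPos_ne_top ω hgM)
    (lintegral_erealPos_ne_top (ω ∗ ϑ) hgM)).2 hint

end Integral

theorem stmt_13_general {d : ℕ} (O : Set (Euc d))
    (r : ℝ) (hr : 0 < r)
    (ϑ : Measure (Euc d)) (hϑ : MeasCompIn ϑ (ball (0 : Euc d) r))
    (hJ : ∀ u : Euc d → EReal, SbhOn u (ball (0 : Euc d) r) → u 0 ≤ eInt ϑ u)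
    (ω : Measure (Euc d)) (hω : MeasCompIn ω O)
    (hUr : IsCompact (closure (⋃ x ∈ msupp ω, ball x r)) ∧
      closure (⋃ x ∈ msupp ω, ball x r) ⊆ O)
    (μc : Measure (Euc d))
    (hμc : ∀ B : Set (Euc d), MeasurableSet B →
      μc B = ∫⁻ x in msupp ω, ϑ ((fun y => x + y) ⁻¹' B) ∂ω) :
    ∀ u : Euc d → EReal, SbhOn u O → eInt ω u ≤ eInt μc u := by
  intro u hu
  obtain ⟨-, -, hSnull, hωfin⟩ := hω
  obtain ⟨-, hTsub, hTnull, hϑfin⟩ := hϑ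
  have : IsFiniteMeasure ω := ⟨hωfin⟩
  have : IsFiniteMeasure ϑ := ⟨hϑfin⟩
  set U := ⋃ x ∈ msupp ω, ball x r
  have hS : ∀ᵐ x ∂ω, x ∈ msupp ω := mem_ae_iff.2 hSnull
  have hSU : ∀ᵐ x ∂ω, x ∈ U := hS.mono fun x hx => mem_biUnion hx (mem_ball_self hr)
  have hadd : ∀ x ∈ msupp ω, ∀ y ∈ ball (0 : Euc d) r, x + y ∈ U := fun x hx y hy =>
    mem_biUnion hx (by simpa using hy)
  have hT : ∀ᵐ y ∂ϑ, y ∈ ball (0 : Euc d) r :=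
    mem_ae_iff.2 (measure_mono_null (compl_subset_compl.2 hTsub) hTnull)
  obtain rfl : μc = ω ∗ ϑ := Measure.eq_conv_of_apply_eq_setLIntegral hS hμc
  have hU : ∀ᵐ x ∂ω, ∀ᵐ y ∂ϑ, x + y ∈ U := hS.mono fun x hx => hT.mono (hadd x hx)
  have hUmeas : MeasurableSet U := (isOpen_biUnion fun _ _ => isOpen_ball).measurableSet
  obtain ⟨g, hg, ⟨M, hgM⟩, hgu⟩ := (hu.1.mono hUr.2).exists_measurable_le_coe_eqOn hUmeas hUr.1
    fun x hx => hu.2.1 x (hUr.2 hx)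
  have hug : ∀ {ν : Measure (Euc d)}, (∀ᵐ z ∂ν, z ∈ U) → eInt ν u = eInt ν g := fun h =>
    eInt_congr_ae (h.mono fun z hz => (hgu hz).symm)
  rw [hug hSU, hug ((Measure.ae_conv_mem_iff ω ϑ hUmeas).2 hU)]
  refine eInt_le_eInt_conv ω ϑ hg hgM ?_
  filter_upwards [hS, hSU, hU] with x hx hxU hxyU
  calc g x = u x := hgu hxU
    _ ≤ eInt ϑ (fun y => u (x + y)) := by
      simpa using hJ _ ((hu.comp_const_add x).mono fun y hy =>
        subset_closure.trans hUr.2 (hadd x hx y hy))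
    _ = eInt ϑ (fun y => g (x + y)) := eInt_congr_ae (hxyU.mono fun y hy => (hgu hy).symm)

/-- Let `ϑ` be a Jensen measure on the ball `r𝔹` at `0`, i.e. a positive
measure with compact support in `r𝔹` such that `u 0 ≤ ∫ u dϑ` for every `u` subharmonic
on `r𝔹`. Let `ω` be a finite positive measure with compact support `S = supp ω` in the open
set `O`, with `⋃_{x ∈ S} B(x,r)` relatively compact in `O`. Then the convolution `ω ∗ ϑ`,
determined by `B ↦ ∫_S ϑ(B - x) dω(x)`, is an `sbh(O)`-balayage of `ω`. -/
theorem stmt_13 {d : ℕ} (O : Set (Euc d)) (hO : IsOpen O) (hOne : O.Nonempty)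
    (r : ℝ) (hr : 0 < r)
    (ϑ : Measure (Euc d)) (hϑ : MeasCompIn ϑ (ball (0 : Euc d) r))
    (hJ : ∀ u : Euc d → EReal, SbhOn u (ball (0 : Euc d) r) → u 0 ≤ eInt ϑ u)
    (ω : Measure (Euc d)) (hω : MeasCompIn ω O)
    (hUr : IsCompact (closure (⋃ x ∈ msupp ω, ball x r)) ∧
      closure (⋃ x ∈ msupp ω, ball x r) ⊆ O)
    (μc : Measure (Euc d))
    (hμc : ∀ B : Set (Euc d), MeasurableSet B →
      μc B = ∫⁻ x in msupp ω, ϑ ((fun y => x + y) ⁻¹' B) ∂ω) :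
    ∀ u : Euc d → EReal, SbhOn u O → eInt ω u ≤ eInt μc u :=
  stmt_13_general O r hr ϑ hϑ hJ ω hω hUr μc hμc
end
end
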